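/- arXiv:math/0311496 — 2 statements merged into one kernel-verified Lean document; each statement's English description precedes it below -/
import Mathlib

section
/- Let f : ℤ → ℤ be a finitely supported function whose total sum Σᵢ f(i) is odd. Then there is at most one integer c such that f(c + i) ≡ f(c - i) (mod 2) for all i ∈ ℤ. -/
/-!
Reduce `f` modulo 2. Reflections in `c` and in `d` compose to the translation by `2 (d - c)`, so
the reduction is periodic with that period; a periodic function with finite support and a nonzero
period vanishes identically, which would make the total sum even.
-/

open Function

theorem Function.Periodic.of_reflections {α M : Type*} [AddCommGroup α] {f : α → M} {a b : α}
    (ha : ∀ x, f (a - x) = f x) (hb : ∀ x, f (b - x) = f x) : Periodic f (b - a) := fun x => by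
  rw [← hb, ← ha]
  congr 1
  abel

theorem Function.Periodic.eq_zero_of_hasFiniteSupport {α M : Type*} [AddCommGroup α]
    [IsAddTorsionFree α] [Zero M] {f : α → M} {p : α} (hf : Periodic f p) (hp : p ≠ 0)
    (hfin : f.HasFiniteSupport) : f = 0 := by
  by_contra hne
  obtain ⟨x, hx⟩ := Function.ne_iff.mp hne
  refine Set.infinite_of_injective_forall_mem (f := fun n : ℤ => x + n • p)
    ((add_right_injective x).comp (smul_left_injective ℤ hp)) (fun n => ?_) hfin
  simpa only [mem_support, hf.zsmul n x, Pi.zero_apply] using hx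

theorem ZMod.intCast_reflect_eq_of_modEq {f : ℤ → ℤ} {n : ℕ} {c : ℤ}
    (h : ∀ i, f (c + i) ≡ f (c - i) [ZMOD n]) (x : ℤ) :
    ((f (2 * c - x) : ℤ) : ZMod n) = f x := by
  rw [ZMod.intCast_eq_intCast_iff]
  convert (h (x - c)).symm using 2 <;> ring_nf

theorem Finsupp.exists_odd_of_odd_sum {α : Type*} {f : α →₀ ℤ} (h : Odd (f.sum fun _ v => v)) :
    ∃ x, Odd (f x) := by
  by_contra! heven
  exact Int.not_even_iff_odd.mpr h
    (Finset.even_sum _ fun x _ => Int.not_odd_iff_even.mp (heven x))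

theorem unique_symmetry_point_of_odd_total_sum (f : ℤ →₀ ℤ)
    (hodd : Odd (f.sum fun _ v => v)) (c d : ℤ)
    (hc : ∀ i : ℤ, f (c + i) ≡ f (c - i) [ZMOD 2])
    (hd : ∀ i : ℤ, f (d + i) ≡ f (d - i) [ZMOD 2]) :
    c = d := by
  set g : ℤ → ZMod 2 := fun x => f x
  have hper : Periodic g (2 * d - 2 * c) :=
    .of_reflections (ZMod.intCast_reflect_eq_of_modEq (n := 2) hc)
      (ZMod.intCast_reflect_eq_of_modEq hd)
  have hfin : g.HasFiniteSupport :=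
    f.hasFiniteSupport.subset (support_comp_subset Int.cast_zero f)
  obtain ⟨x, hx⟩ := Finsupp.exists_odd_of_odd_sum hodd
  have hg : g ≠ 0 := fun h =>
    Int.not_even_iff_odd.mpr hx (ZMod.intCast_eq_zero_iff_even.mp (congrFun h x))
  by_contra hne
  exact hg (hper.eq_zero_of_hasFiniteSupport (by omega) hfin)
end

section
/- Every unit of the group algebra ℤ[ℝ] is of the form ± Tʳ for some r ∈ ℝ, i.e. the units of AddMonoidAlgebra ℤ ℝ are exactly the elements ±1 times a single monomial with coefficient 1. -/
/-!
In a linearly ordered group such as `ℝ`, two finite nonempty sets that are not both singletons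
have two distinct sums that are each attained by a unique pair (max + max and min + min), i.e.
`ℝ` has `TwoUniqueSums`. The corresponding coefficients of a product `f * g` over a ring without
zero divisors are products of nonzero coefficients, so `f * g` has at least two monomials unless
`f` and `g` are both monomials. Hence a unit of `R[A]` is a monomial `single a r`, and `r` is a unit
of `R`; for `R = ℤ` this leaves `r = ±1`.
-/

open Finset

namespace AddMonoidAlgebra

variable {R A : Type*} [Semiring R] [NoZeroDivisors R]

theorem one_lt_card_support_mul [Add A] [TwoUniqueSums A] {f g : AddMonoidAlgebra R A}
    (h : 1 < #f.coeff.support * #g.coeff.support) : 1 < #(f * g).coeff.support := by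
  obtain ⟨p, hp, q, hq, hpq, hup, huq⟩ := TwoUniqueSums.uniqueAdd_of_one_lt_card h
  rw [mem_product] at hp hq
  have mem_support {a b} (ha : a ∈ f.coeff.support) (hb : b ∈ g.coeff.support)
      (hu : UniqueAdd f.coeff.support g.coeff.support a b) : a + b ∈ (f * g).coeff.support := by
    rw [Finsupp.mem_support_iff] at ha hb ⊢
    rw [coeff_mul_add_of_uniqueAdd hu]
    exact mul_ne_zero ha hb
  refine one_lt_card.2 ⟨_, mem_support hp.1 hp.2 hup, _, mem_support hq.1 hq.2 huq, fun he => ?_⟩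
  obtain ⟨h1, h2⟩ := hup hq.1 hq.2 he.symm
  exact hpq (Prod.ext h1.symm h2.symm)

theorem exists_eq_single_of_mul_eq_one [AddZeroClass A] [TwoUniqueSums A] [Nontrivial R]
    {f g : AddMonoidAlgebra R A} (h : f * g = 1) : ∃ a r, f = single a r := by
  have support_nonempty {x : AddMonoidAlgebra R A} (hx : x ≠ 0) : x.coeff.support.Nonempty := by
    rwa [Finsupp.support_nonempty_iff, Ne, coeff_eq_zero]
  have hf := (support_nonempty (left_ne_zero_of_mul_eq_one h)).card_pos
  have hg := (support_nonempty (right_ne_zero_of_mul_eq_one h)).card_pos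
  have hfg : ¬1 < #(f * g).coeff.support := by simp [h, one_def, coeff_single]
  have hcard : #f.coeff.support = 1 := by
    have := mt one_lt_card_support_mul hfg
    nlinarith
  obtain ⟨a, ha⟩ := card_eq_one.1 hcard
  exact ⟨a, f.coeff a, coeff_injective (Finsupp.support_eq_singleton.1 ha).2⟩

theorem exists_isUnit_eq_single_of_isUnit [AddMonoid A] [TwoUniqueSums A] [Nontrivial R]
    {f : AddMonoidAlgebra R A} (hf : IsUnit f) : ∃ a r, IsUnit r ∧ f = single a r := by
  obtain ⟨u, rfl⟩ := hf
  obtain ⟨a, r, hr⟩ := exists_eq_single_of_mul_eq_one u.mul_inv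
  obtain ⟨b, s, hs⟩ := exists_eq_single_of_mul_eq_one u.inv_mul
  have hrs := u.mul_inv
  have hsr := u.inv_mul
  rw [hr, hs, single_mul_single, one_def, single_inj] at hrs hsr
  simp only [one_ne_zero, and_false, or_false] at hrs hsr
  exact ⟨a, r, isUnit_iff_exists.2 ⟨s, hrs.2, hsr.2⟩, hr⟩

end AddMonoidAlgebra

theorem units_of_groupAlgebra_int_real (u : (AddMonoidAlgebra ℤ ℝ)ˣ) :
    ∃ r : ℝ, (u : AddMonoidAlgebra ℤ ℝ) = AddMonoidAlgebra.single r 1 ∨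
      (u : AddMonoidAlgebra ℤ ℝ) = -AddMonoidAlgebra.single r 1 := by
  obtain ⟨r, c, hc, hu⟩ := AddMonoidAlgebra.exists_isUnit_eq_single_of_isUnit u.isUnit
  rcases Int.isUnit_iff.1 hc with rfl | rfl
  · exact ⟨r, .inl hu⟩
  · exact ⟨r, .inr (by rw [hu, AddMonoidAlgebra.single_neg])⟩
end
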